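/- If X is a simplicial complex, v a vertex of X such that the link of v in X is (d−1)-collapsible, and the deletion X \ {v} is d-collapsible, then X is d-collapsible. -/

import Mathlib

/-!
A `(d-1)`-collapse of the link of `v` onto `L` lifts, pair by pair via `σ ↦ σ ∪ {v}`, to a
collapse of `X` onto the complex whose faces through `v` are `{v}` and the cones over `L`; these
all have cardinality at most `d`. The collapse sequence of the deletion is then replayed on that
complex. A pair `σ ⊂ τ` with `|τ| ≤ d` is skipped. When `|τ| > d`, the small faces through `v`
may keep `σ` from being free, but every coface of a `β` with `σ ⊆ β ⊂ τ` and `|β| ≥ d` is large,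
hence lies in the deletion and contains `σ`, so it is `τ`: one collapses `(β, τ)` instead, with
`|β| = max d |σ|`.
-/

/-- An abstract simplicial complex on vertex type `V`: a family of nonempty
finite sets closed under passing to nonempty subsets. -/
structure AbsComplex (V : Type*) where
  faces : Set (Finset V)
  nonempty_mem : ∀ ⦃σ⦄, σ ∈ faces → σ.Nonempty
  down_closed : ∀ ⦃σ τ : Finset V⦄, σ ∈ faces → τ ⊆ σ → τ.Nonempty → τ ∈ faces

/-- The clique (flag) complex of a graph: faces are the nonempty cliques. -/
def cliqueComplex {V : Type*} (G : SimpleGraph V) : AbsComplex V where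
  faces := {σ | σ.Nonempty ∧ G.IsClique σ}
  nonempty_mem := fun _ h => h.1
  down_closed := fun _ _ h hsub hne => ⟨hne, h.2.subset (Finset.coe_subset.mpr hsub)⟩

/-- `σ` is a free face with unique proper coface `τ`. -/
def IsFreeFace {V : Type*} (X : AbsComplex V) (σ τ : Finset V) : Prop :=
  σ ∈ X.faces ∧ τ ∈ X.faces ∧ σ ⊂ τ ∧ ∀ ρ ∈ X.faces, σ ⊂ ρ → ρ = τ

/-- An elementary collapse: remove a free face together with its unique proper coface. -/
def CollapseStep {V : Type*} (X Y : AbsComplex V) : Prop :=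
  ∃ σ τ, IsFreeFace X σ τ ∧ Y.faces = X.faces \ {σ, τ}

/-- `X` is `d`-collapsible: some sequence of elementary collapses removes all
faces of dimension at least `d` (i.e. of cardinality at least `d + 1`). -/
def Collapsible {V : Type*} (d : ℕ) (X : AbsComplex V) : Prop :=
  ∃ Y : AbsComplex V, Relation.ReflTransGen CollapseStep X Y ∧ ∀ σ ∈ Y.faces, σ.card ≤ d

/-- The link of a vertex `v` in the complex `X`. -/
def link {V : Type*} [DecidableEq V] (X : AbsComplex V) (v : V) : AbsComplex V where
  faces := {τ | τ.Nonempty ∧ v ∉ τ ∧ insert v τ ∈ X.faces}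
  nonempty_mem := fun _ h => h.1
  down_closed := by
    rintro σ τ ⟨hne, hv, hmem⟩ hsub htne
    exact ⟨htne, fun h => hv (hsub h),
      X.down_closed hmem (Finset.insert_subset_insert _ hsub) (Finset.insert_nonempty _ _)⟩

/-- The deletion of a vertex `v` from the complex `X`. -/
def deletion {V : Type*} (X : AbsComplex V) (v : V) : AbsComplex V where
  faces := {σ | σ ∈ X.faces ∧ v ∉ σ}
  nonempty_mem := fun _ h => X.nonempty_mem h.1
  down_closed := fun _ τ h hsub hne =>
    ⟨X.down_closed h.1 hsub hne, fun hv => h.2 (hsub hv)⟩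

namespace AbsComplex

variable {V : Type*}

@[ext]
theorem ext {X Y : AbsComplex V} (h : X.faces = Y.faces) : X = Y := by
  cases X; cases Y; cases h; rfl

end AbsComplex

section Collapses

variable {V : Type*} {X Y : AbsComplex V} {σ τ : Finset V}

def IsFreeFace.collapse (h : IsFreeFace X σ τ) : AbsComplex V where
  faces := X.faces \ {σ, τ}
  nonempty_mem := fun _ hρ => X.nonempty_mem hρ.1
  down_closed := by
    rintro ρ μ ⟨hρ, hρστ⟩ hμρ hμ
    refine ⟨X.down_closed hρ hμρ hμ, ?_⟩
    obtain rfl | hμρ := eq_or_ssubset_of_subset hμρ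
    · exact hρστ
    · refine fun hμστ => hρστ (Or.inr (h.2.2.2 ρ hρ ?_))
      rcases hμστ with rfl | rfl
      exacts [hμρ, h.2.2.1.trans hμρ]

theorem IsFreeFace.collapseStep (h : IsFreeFace X σ τ) : CollapseStep X h.collapse :=
  ⟨σ, τ, h, rfl⟩

theorem CollapseStep.faces_subset (h : CollapseStep X Y) : Y.faces ⊆ X.faces := by
  obtain ⟨σ, τ, -, hY⟩ := h
  exact hY ▸ Set.sdiff_subset

theorem faces_subset_of_collapses (h : Relation.ReflTransGen CollapseStep X Y) :
    Y.faces ⊆ X.faces := by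
  induction h with
  | refl => exact subset_rfl
  | tail _ hYZ ih => exact hYZ.faces_subset.trans ih

theorem Collapsible.of_collapses {d : ℕ} (h : Relation.ReflTransGen CollapseStep X Y)
    (hY : Collapsible d Y) : Collapsible d X :=
  let ⟨Z, hYZ, hZ⟩ := hY
  ⟨Z, h.trans hYZ, hZ⟩

end Collapses

section Shadows

variable {V : Type*} {d : ℕ} {D D' Z : AbsComplex V} {σ τ β : Finset V}

/-- The invariant of replaying the collapses of `D` on `Z` above cardinality `d`. -/
def Shadows (d : ℕ) (D Z : AbsComplex V) : Prop :=
  (∀ ρ ∈ Z.faces, d < ρ.card → ρ ∈ D.faces) ∧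
    ∀ γ ∈ D.faces, γ ∉ Z.faces → γ.card ≤ d ∧ ∀ ρ ∈ D.faces, ¬γ ⊂ ρ

namespace Shadows

theorem collapse_of_card_le (hZ : Shadows d D Z) (h : IsFreeFace D σ τ) (hτ : τ.card ≤ d) :
    Shadows d h.collapse Z := by
  have hστ := Finset.card_lt_card h.2.2.1
  refine ⟨fun ρ hρ hρd => ⟨hZ.1 ρ hρ hρd, ?_⟩, fun γ hγ hγZ => ?_⟩
  · rintro (rfl | rfl) <;> omega
  · obtain ⟨hγd, hγmax⟩ := hZ.2 γ hγ.1 hγZ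
    exact ⟨hγd, fun ρ hρ => hγmax ρ hρ.1⟩

theorem isFreeFace (hZ : Shadows d D Z) (h : IsFreeFace D σ τ) (hσβ : σ ⊆ β) (hβτ : β ⊂ τ)
    (hβ : d ≤ β.card) : IsFreeFace Z β τ := by
  obtain ⟨hσ, hτ, -, hτuniq⟩ := h
  have hβD : β ∈ D.faces := D.down_closed hτ hβτ.subset ((D.nonempty_mem hσ).mono hσβ)
  refine ⟨?_, ?_, hβτ, fun ρ hρ hβρ => ?_⟩
  · by_contra hβZ
    exact (hZ.2 β hβD hβZ).2 τ hτ hβτ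
  · by_contra hτZ
    have := Finset.card_lt_card hβτ
    have := (hZ.2 τ hτ hτZ).1
    omega
  · have hρD := hZ.1 ρ hρ (hβ.trans_lt (Finset.card_lt_card hβρ))
    exact hτuniq ρ hρD (hσβ.trans_ssubset hβρ)

theorem collapse_collapse (hZ : Shadows d D Z) (h : IsFreeFace D σ τ) (hσβ : σ ⊆ β)
    (hβτ : β ⊂ τ) (hβ : β.card = max d σ.card) :
    Shadows d h.collapse (hZ.isFreeFace h hσβ hβτ (hβ ▸ le_max_left _ _)).collapse := by
  have hβσ : d < β.card → σ = β := fun hβd =>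
    Finset.eq_of_subset_of_card_le hσβ (by omega)
  refine ⟨fun ρ ⟨hρZ, hρβτ⟩ hρd => ⟨hZ.1 ρ hρZ hρd, ?_⟩, ?_⟩
  · rintro (rfl | rfl)
    · exact hρβτ (Or.inl (hβσ (hβ ▸ hρd.trans_le (le_max_right _ _))))
    · exact hρβτ (Or.inr rfl)
  rintro γ ⟨hγD, hγστ⟩ hγZ
  by_cases hγZ' : γ ∈ Z.faces
  · obtain rfl : γ = β := by
      have hγβτ : γ ∈ ({β, τ} : Set (Finset V)) := not_not.mp fun h => hγZ ⟨hγZ', h⟩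
      rcases hγβτ with rfl | rfl
      · rfl
      · exact absurd (Or.inr rfl) hγστ
    refine ⟨not_lt.mp fun hγd => hγστ (Or.inl (hβσ hγd).symm), fun ρ ⟨hρD, hρστ⟩ hγρ => ?_⟩
    exact hρστ (Or.inr (h.2.2.2 ρ hρD (hσβ.trans_ssubset hγρ)))
  · obtain ⟨hγd, hγmax⟩ := hZ.2 γ hγD hγZ'
    exact ⟨hγd, fun ρ hρ => hγmax ρ hρ.1⟩

theorem exists_collapses_of_collapseStep (hZ : Shadows d D Z) (h : CollapseStep D D') :
    ∃ Z', Relation.ReflTransGen CollapseStep Z Z' ∧ Shadows d D' Z' := by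
  obtain ⟨σ, τ, h, hD'⟩ := h
  obtain rfl : D' = h.collapse := AbsComplex.ext hD'
  rcases le_or_gt τ.card d with hτ | hτ
  · exact ⟨Z, .refl, hZ.collapse_of_card_le h hτ⟩
  have hστ := Finset.card_lt_card h.2.2.1
  obtain ⟨β, hσβ, hβτ, hβ⟩ := Finset.exists_subsuperset_card_eq h.2.2.1.subset
    (le_max_right d σ.card) (max_le hτ.le hστ.le)
  have hβτ' : β ⊂ τ := ssubset_of_subset_of_ne hβτ (by rintro rfl; omega)
  exact ⟨_, .single (isFreeFace hZ h hσβ hβτ' (hβ ▸ le_max_left _ _)).collapseStep,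
    hZ.collapse_collapse h hσβ hβτ' hβ⟩

theorem exists_collapses (hZ : Shadows d D Z) (h : Relation.ReflTransGen CollapseStep D D') :
    ∃ Z', Relation.ReflTransGen CollapseStep Z Z' ∧ Shadows d D' Z' := by
  induction h with
  | refl => exact ⟨Z, .refl, hZ⟩
  | tail _ hstep ih =>
    obtain ⟨Z₁, hZZ₁, hZ₁⟩ := ih
    obtain ⟨Z₂, hZ₁Z₂, hZ₂⟩ := hZ₁.exists_collapses_of_collapseStep hstep
    exact ⟨Z₂, hZZ₁.trans hZ₁Z₂, hZ₂⟩

end Shadows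

theorem Collapsible.of_shadows (hD : Collapsible d D) (hZ : Shadows d D Z) : Collapsible d Z := by
  obtain ⟨D', hDD', hD'⟩ := hD
  obtain ⟨Z', hZZ', hZ'⟩ := hZ.exists_collapses hDD'
  refine ⟨Z', hZZ', fun ρ hρ => not_lt.mp fun hρd => ?_⟩
  exact (hD' ρ (hZ'.1 ρ hρ hρd)).not_gt hρd

end Shadows

theorem Finset.insert_right_inj_of_notMem {α : Type*} [DecidableEq α] {a : α}
    {s t : Finset α} (hs : a ∉ s) (ht : a ∉ t) : insert a s = insert a t ↔ s = t := by
  simp [Finset.Subset.antisymm_iff, hs, ht]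

theorem Finset.insert_ssubset_insert_iff_of_notMem {α : Type*} [DecidableEq α] {a : α}
    {s t : Finset α} (hs : a ∉ s) (ht : a ∉ t) : insert a s ⊂ insert a t ↔ s ⊂ t := by
  simp [Finset.ssubset_iff_subset_ne, Finset.insert_right_inj_of_notMem hs ht, hs]

section RestrictLink

variable {V : Type*} [DecidableEq V] {X Y Y' L : AbsComplex V} {v : V} {ρ μ : Finset V}

/-- `X` with the link of `v` cut down to its intersection with `Y`. -/
def restrictLink (X : AbsComplex V) (v : V) (Y : AbsComplex V) : AbsComplex V where
  faces := {ρ | ρ ∈ X.faces ∧ (v ∈ ρ → ρ = {v} ∨ ρ.erase v ∈ Y.faces)}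
  nonempty_mem := fun _ hρ => X.nonempty_mem hρ.1
  down_closed := by
    rintro ρ μ ⟨hρ, hρY⟩ hμρ hμ
    refine ⟨X.down_closed hρ hμρ hμ, fun hvμ => ?_⟩
    rcases hρY (hμρ hvμ) with rfl | hρY
    · exact Or.inl ((Finset.subset_singleton_iff.mp hμρ).resolve_left hμ.ne_empty)
    rcases (μ.erase v).eq_empty_or_nonempty with hμv | hμv
    · exact Or.inl (((Finset.erase_eq_empty_iff μ v).mp hμv).resolve_left hμ.ne_empty)
    · exact Or.inr (Y.down_closed hρY (Finset.erase_subset_erase v hμρ) hμv)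

theorem mem_restrictLink_of_notMem (hvρ : v ∉ ρ) :
    ρ ∈ (restrictLink X v Y).faces ↔ ρ ∈ X.faces :=
  ⟨And.left, fun hρ => ⟨hρ, fun hv => absurd hv hvρ⟩⟩

theorem mem_restrictLink_insert (hvμ : v ∉ μ) :
    insert v μ ∈ (restrictLink X v Y).faces ↔ insert v μ ∈ X.faces ∧ (μ = ∅ ∨ μ ∈ Y.faces) := by
  have hμ : insert v μ = {v} ↔ μ = ∅ := by
    rw [← LawfulSingleton.insert_empty_eq,
      Finset.insert_right_inj_of_notMem hvμ (Finset.notMem_empty v)]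
  simp only [restrictLink, Set.mem_ofPred_eq, Finset.mem_insert_self, forall_const,
    Finset.erase_insert hvμ, hμ]

theorem restrictLink_link : restrictLink X v (link X v) = X := by
  ext ρ
  refine ⟨And.left, fun hρ => ⟨hρ, fun hvρ => ?_⟩⟩
  rcases (ρ.erase v).eq_empty_or_nonempty with hρv | hρv
  · exact .inl (((Finset.erase_eq_empty_iff ρ v).mp hρv).resolve_left (X.nonempty_mem hρ).ne_empty)
  · exact .inr ⟨hρv, Finset.notMem_erase v ρ, by rwa [Finset.insert_erase hvρ]⟩

theorem collapseStep_restrictLink (hY : Y.faces ⊆ (link X v).faces) (h : CollapseStep Y Y') :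
    CollapseStep (restrictLink X v Y) (restrictLink X v Y') := by
  obtain ⟨σ, τ, ⟨hσ, hτ, hστ, hτuniq⟩, hY'⟩ := h
  obtain ⟨hσne, hvσ, hσX⟩ := hY hσ
  obtain ⟨hτne, hvτ, hτX⟩ := hY hτ
  have exists_insert (ρ : Finset V) (hvρ : v ∈ ρ) : ∃ μ, v ∉ μ ∧ ρ = insert v μ :=
    ⟨ρ.erase v, Finset.notMem_erase v ρ, (Finset.insert_erase hvρ).symm⟩
  refine ⟨insert v σ, insert v τ, ⟨(mem_restrictLink_insert hvσ).2 ⟨hσX, .inr hσ⟩,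
    (mem_restrictLink_insert hvτ).2 ⟨hτX, .inr hτ⟩,
    (Finset.insert_ssubset_insert_iff_of_notMem hvσ hvτ).2 hστ, fun ρ hρ hσρ => ?_⟩, ?_⟩
  · obtain ⟨μ, hvμ, rfl⟩ := exists_insert ρ (hσρ.subset (Finset.mem_insert_self v σ))
    rw [Finset.insert_ssubset_insert_iff_of_notMem hvσ hvμ] at hσρ
    obtain ⟨-, hμ⟩ := (mem_restrictLink_insert hvμ).1 hρ
    rw [hτuniq μ (hμ.resolve_left (hσne.mono hσρ.subset).ne_empty) hσρ]
  ext ρ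
  by_cases hvρ : v ∈ ρ
  · obtain ⟨μ, hvμ, rfl⟩ := exists_insert ρ hvρ
    have hμστ : μ = ∅ → ¬(μ = σ ∨ μ = τ) := by
      rintro rfl (rfl | rfl)
      exacts [Finset.not_nonempty_empty hσne, Finset.not_nonempty_empty hτne]
    simp only [mem_restrictLink_insert hvμ, hY', Set.mem_sdiff, Set.mem_insert_iff,
      Set.mem_singleton_iff, Finset.insert_right_inj_of_notMem hvμ hvσ,
      Finset.insert_right_inj_of_notMem hvμ hvτ]
    tauto
  · rw [Set.mem_sdiff, mem_restrictLink_of_notMem hvρ, mem_restrictLink_of_notMem hvρ]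
    refine ⟨fun hρ => ⟨hρ, ?_⟩, And.left⟩
    rintro (rfl | rfl) <;> exact hvρ (Finset.mem_insert_self _ _)

theorem collapses_restrictLink (h : Relation.ReflTransGen CollapseStep (link X v) L) :
    Relation.ReflTransGen CollapseStep X (restrictLink X v L) := by
  induction h with
  | refl => rw [restrictLink_link]
  | tail hlinkY hYY' ih =>
    exact ih.tail (collapseStep_restrictLink (faces_subset_of_collapses hlinkY) hYY')

theorem shadows_deletion_restrictLink {d : ℕ} (hd : 1 ≤ d)
    (hL : ∀ σ ∈ L.faces, σ.card ≤ d - 1) : Shadows d (deletion X v) (restrictLink X v L) := by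
  refine ⟨fun ρ ⟨hρ, hρL⟩ hρd => ⟨hρ, fun hvρ => ?_⟩,
    fun γ hγ hγZ => absurd ((mem_restrictLink_of_notMem hγ.2).2 hγ.1) hγZ⟩
  rcases hρL hvρ with rfl | hρL
  · rw [Finset.card_singleton] at hρd
    omega
  · have := Finset.card_erase_add_one hvρ
    have := hL _ hρL
    omega

end RestrictLink

/-- if the link of `v` in `X` is `(d−1)`-collapsible and the deletion
`X \ {v}` is `d`-collapsible, then `X` is `d`-collapsible. -/
theorem stmt10 {V : Type*} [DecidableEq V] (d : ℕ) (hd : 1 ≤ d)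
    (X : AbsComplex V) (v : V)
    (hlk : Collapsible (d - 1) (link X v))
    (hdel : Collapsible d (deletion X v)) :
    Collapsible d X := by
  obtain ⟨L, hlinkL, hL⟩ := hlk
  exact .of_collapses (collapses_restrictLink hlinkL)
    (hdel.of_shadows (shadows_deletion_restrictLink hd hL))
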